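/- (Singularity criterion of type D, k ≤ n−2; the key step of the main theorem for D_n/P(α_k).) Let n ≥ 3 and 1 ≤ k ≤ n−2, and let a_1,…,a_n be nonnegative integers. Then for every integer t, there exists a positive root α ∈ Φ⁺_D with ⟨w(t), α⟩ = 0 if and only if t belongs to the step-matrix entry set S^D_{k,a}. -/

import Mathlib

open Finset

/-- The positive roots of type `Dₙ`: `eₚ+e_q` and `eₚ-e_q` (`p<q`). -/
def PhiD (n : ℕ) : Set (Fin n → ℝ) :=
  {α | ∃ p q : Fin n, p < q ∧
      α = fun i => (if i = p then (1:ℝ) else 0) + (if i = q then 1 else 0)} ∪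
  {α | ∃ p q : Fin n, p < q ∧
      α = fun i => (if i = p then (1:ℝ) else 0) - (if i = q then 1 else 0)}

/-- Standard inner product on `ℝⁿ`. -/
noncomputable def ip (n : ℕ) (v w : Fin n → ℝ) : ℝ := ∑ i, v i * w i

/-- The coordinate form of the weight `λ+ρ-tλ_k` for type `Dₙ`, `k ≤ n-2`
(coordinates are indexed one-based). -/
noncomputable def wD (n k : ℕ) (a : ℕ → ℤ) (t : ℤ) : Fin n → ℝ := fun i =>
  if i.val + 1 = n then ((a n : ℝ) - (a (n - 1) : ℝ)) / 2
  else (∑ u ∈ Icc (i.val + 1) (n - 2), (a u : ℝ)) + ((a (n - 1) : ℝ) + (a n : ℝ)) / 2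
    + ((n : ℝ) - (i.val + 1)) - (if i.val + 1 ≤ k then (t : ℝ) else 0)

/-- The step-matrix entry set `S^D_{k,a}`. -/
def SD (n k : ℕ) (a : ℕ → ℤ) : Set ℚ :=
  {x | ∃ i j : ℕ, 1 ≤ i ∧ i ≤ k ∧ 1 ≤ j ∧ j ≤ n - k ∧
    x = (∑ u ∈ Icc (k + 1 - i) (k + j - 1), (a u : ℚ)) + i + j - 1} ∪
  {x | ∃ i j : ℕ, 1 ≤ i ∧ i ≤ k ∧ 1 ≤ j ∧ j ≤ n - k ∧
    x = (∑ u ∈ Icc (k + 1 - i) (n - 2), (a u : ℚ))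
      + (∑ u ∈ Icc (n + 1 - j) n, (a u : ℚ))
      + n - k + i + j - 2} ∪
  {x | ∃ i j : ℕ, 1 ≤ i ∧ i < j ∧ j ≤ k ∧
    x = ((∑ u ∈ Icc (k + 1 - i) (n - 2), (a u : ℚ))
      + (∑ u ∈ Icc (k + 1 - j) n, (a u : ℚ))
      + i + j + 2 * n - 2 * k - 2) / 2}

/-! Since `⟨w(t), e_p ± e_q⟩ = w_p ± w_q`, everything is about pairs of coordinates. Write
`w(t) = r - t (1,…,1,0,…,0)`, with `k` ones and `r` the coordinates of `λ + ρ`.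
For `a ≥ 0` and `p < q` both `r_p - r_q` and `r_p + r_q` are positive, so a root can only be
orthogonal to `w(t)` if `t` enters: `e_p - e_q` with `p ≤ k < q` forces `t = r_p - r_q`,
`e_p + e_q` with `p ≤ k < q` forces `t = r_p + r_q`, and `e_p + e_q` with `q ≤ k` forces
`2t = r_p + r_q`. Putting `p = k + 1 - i` and `q = k + j`, `q = n + 1 - j`, resp.
`(p, q) = (k + 1 - j, k + 1 - i)`, these are the three families of `S^D_{k,a}`. -/

lemma ip_add_root (n : ℕ) (v : Fin n → ℝ) (p q : Fin n) :
    ip n v (fun i => (if i = p then (1:ℝ) else 0) + (if i = q then 1 else 0)) = v p + v q := by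
  simp [ip, mul_add, Finset.sum_add_distrib]

lemma ip_sub_root (n : ℕ) (v : Fin n → ℝ) (p q : Fin n) :
    ip n v (fun i => (if i = p then (1:ℝ) else 0) - (if i = q then 1 else 0)) = v p - v q := by
  simp [ip, mul_sub, Finset.sum_sub_distrib]

lemma exists_mem_PhiD_ip_eq_zero_iff (n : ℕ) (v : Fin n → ℝ) :
    (∃ α ∈ PhiD n, ip n v α = 0) ↔ ∃ p q : Fin n, p < q ∧ (v p + v q = 0 ∨ v p = v q) := by
  simp only [PhiD, Set.mem_union, Set.mem_ofPred_eq]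
  constructor
  · rintro ⟨α, ⟨p, q, hpq, rfl⟩ | ⟨p, q, hpq, rfl⟩, h⟩
    · exact ⟨p, q, hpq, Or.inl (by rwa [ip_add_root] at h)⟩
    · exact ⟨p, q, hpq, Or.inr (by rwa [ip_sub_root, sub_eq_zero] at h)⟩
  · rintro ⟨p, q, hpq, h | h⟩
    · exact ⟨_, Or.inl ⟨p, q, hpq, rfl⟩, by rwa [ip_add_root]⟩
    · exact ⟨_, Or.inr ⟨p, q, hpq, rfl⟩, by rw [ip_sub_root, h, sub_self]⟩

lemma exists_fin_lt_iff_exists_nat {n : ℕ} (f : ℕ → ℕ → Prop) :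
    (∃ p q : Fin n, p < q ∧ f (p + 1) (q + 1)) ↔ ∃ P Q, 1 ≤ P ∧ P < Q ∧ Q ≤ n ∧ f P Q := by
  constructor
  · rintro ⟨p, q, hpq, h⟩
    exact ⟨p + 1, q + 1, by omega, by simpa using hpq, q.isLt, h⟩
  · rintro ⟨P, Q, hP, hPQ, hQ, h⟩
    refine ⟨⟨P - 1, by omega⟩, ⟨Q - 1, by omega⟩, Fin.mk_lt_mk.2 (by omega), ?_⟩
    simpa [Nat.sub_add_cancel hP, Nat.sub_add_cancel (hP.trans hPQ.le)] using h

/-- The coordinates of `λ + ρ`, indexed from `1`; `wD` subtracts `t` from the first `k` of them. -/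
def rhoCoord (n : ℕ) (a : ℕ → ℤ) (m : ℕ) : ℚ :=
  if m = n then ((a n : ℚ) - (a (n - 1) : ℚ)) / 2
  else (∑ u ∈ Icc m (n - 2), (a u : ℚ)) + ((a (n - 1) : ℚ) + (a n : ℚ)) / 2 + ((n : ℚ) - m)

def wDCoord (n k : ℕ) (a : ℕ → ℤ) (t : ℚ) (m : ℕ) : ℚ :=
  rhoCoord n a m - if m ≤ k then t else 0

lemma wD_apply {n k : ℕ} (hk : k < n) (a : ℕ → ℤ) (t : ℤ) (i : Fin n) :
    wD n k a t i = wDCoord n k a t (i + 1) := by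
  unfold wD wDCoord rhoCoord
  split_ifs <;> first | omega | push_cast; ring

lemma sum_Icc_eq_sum_Ico_add_sum_Icc {M : Type*} [AddCommMonoid M] (f : ℕ → M) {P Q m : ℕ}
    (hPQ : P ≤ Q) (hQm : Q ≤ m + 1) :
    ∑ u ∈ Icc P m, f u = ∑ u ∈ Ico P Q, f u + ∑ u ∈ Icc Q m, f u := by
  rw [← Finset.sum_union (Finset.disjoint_left.2 fun u hu hu' => by
    simp only [Finset.mem_Icc, Finset.mem_Ico] at hu hu'; omega)]
  congr 1
  ext u; simp only [Finset.mem_Icc, Finset.mem_union, Finset.mem_Ico]; omega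

section rhoCoord

variable {n : ℕ} {a : ℕ → ℤ} {P Q : ℕ}

lemma rhoCoord_sub (hP : 1 ≤ P) (hPQ : P < Q) (hQ : Q ≤ n) :
    rhoCoord n a P - rhoCoord n a Q = ∑ u ∈ Ico P Q, (a u : ℚ) + ((Q : ℚ) - P) := by
  obtain ⟨m, rfl⟩ : ∃ m, n = m + 2 := ⟨n - 2, by omega⟩
  unfold rhoCoord
  rw [if_neg (by omega), Nat.add_sub_cancel, show m + 2 - 1 = m + 1 by omega]
  rcases hQ.eq_or_lt with rfl | hQn
  · rw [if_pos rfl, Finset.sum_Ico_succ_top (show P ≤ m + 1 by omega),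
      Finset.Ico_add_one_right_eq_Icc]
    push_cast; ring
  · rw [if_neg hQn.ne, sum_Icc_eq_sum_Ico_add_sum_Icc _ hPQ.le (by omega)]
    ring

lemma rhoCoord_add (hP : 1 ≤ P) (hPn : P < n) (hQ : Q ≤ n) :
    rhoCoord n a P + rhoCoord n a Q
      = ∑ u ∈ Icc P (n - 2), (a u : ℚ) + ∑ u ∈ Icc Q n, (a u : ℚ) + (2 * n - P - Q) := by
  obtain ⟨m, rfl⟩ : ∃ m, n = m + 2 := ⟨n - 2, by omega⟩
  unfold rhoCoord
  rw [if_neg (by omega), Nat.add_sub_cancel, show m + 2 - 1 = m + 1 by omega]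
  rcases hQ.eq_or_lt with rfl | hQn
  · rw [if_pos rfl, Finset.Icc_self, Finset.sum_singleton]
    push_cast; ring
  · rw [if_neg hQn.ne, Finset.sum_Icc_succ_top (by omega), Finset.sum_Icc_succ_top (by omega)]
    push_cast; ring

lemma sum_coeff_nonneg (ha : ∀ u, 1 ≤ u → u ≤ n → 0 ≤ a u) {s : Finset ℕ}
    (hs : ∀ u ∈ s, 1 ≤ u ∧ u ≤ n) :
    0 ≤ ∑ u ∈ s, (a u : ℚ) :=
  Finset.sum_nonneg fun u hu => by exact_mod_cast ha u (hs u hu).1 (hs u hu).2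

lemma rhoCoord_sub_pos (ha : ∀ u, 1 ≤ u → u ≤ n → 0 ≤ a u)
    (hP : 1 ≤ P) (hPQ : P < Q) (hQ : Q ≤ n) :
    0 < rhoCoord n a P - rhoCoord n a Q := by
  have hsum := sum_coeff_nonneg ha (s := Ico P Q) fun u hu => by
    simp only [Finset.mem_Ico] at hu; omega
  have hgap : (P : ℚ) < Q := by exact_mod_cast hPQ
  rw [rhoCoord_sub hP hPQ hQ]
  linarith

lemma rhoCoord_add_pos (ha : ∀ u, 1 ≤ u → u ≤ n → 0 ≤ a u)
    (hP : 1 ≤ P) (hPn : P < n) (hQ : 1 ≤ Q) (hQn : Q ≤ n) :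
    0 < rhoCoord n a P + rhoCoord n a Q := by
  have hsumP := sum_coeff_nonneg ha (s := Icc P (n - 2)) fun u hu => by
    simp only [Finset.mem_Icc] at hu; omega
  have hsumQ := sum_coeff_nonneg ha (s := Icc Q n) fun u hu => by
    simp only [Finset.mem_Icc] at hu; omega
  have hgap : (P : ℚ) + Q < 2 * n := by exact_mod_cast (show P + Q < 2 * n by omega)
  rw [rhoCoord_add hP hPn hQn]
  linarith

lemma wDCoord_root_iff (ha : ∀ u, 1 ≤ u → u ≤ n → 0 ≤ a u) {k : ℕ} {t : ℚ}
    (hP : 1 ≤ P) (hPQ : P < Q) (hQ : Q ≤ n) :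
    (wDCoord n k a t P + wDCoord n k a t Q = 0 ∨ wDCoord n k a t P = wDCoord n k a t Q) ↔
      (P ≤ k ∧ k < Q ∧ (t = rhoCoord n a P + rhoCoord n a Q ∨ t = rhoCoord n a P - rhoCoord n a Q))
      ∨ (Q ≤ k ∧ 2 * t = rhoCoord n a P + rhoCoord n a Q) := by
  have hsub := rhoCoord_sub_pos ha hP hPQ hQ
  have hadd := rhoCoord_add_pos ha hP (hPQ.trans_le hQ) (hP.trans hPQ.le) hQ
  unfold wDCoord
  by_cases hQk : Q ≤ k
  · rw [if_pos (hPQ.le.trans hQk), if_pos hQk]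
    simp only [hQk, true_and, not_lt.2 hQk, false_and, and_false, false_or]
    constructor
    · rintro (h | h) <;> linarith
    · intro h; left; linarith
  by_cases hPk : P ≤ k
  · rw [if_pos hPk, if_neg hQk]
    simp only [hPk, hQk, true_and, not_le.1 hQk, false_and, or_false]
    constructor <;> rintro (h | h) <;> first | (left; linarith) | (right; linarith)
  · rw [if_neg hPk, if_neg hQk]
    simp only [hPk, hQk, false_and, or_false]
    constructor
    · rintro (h | h) <;> linarith
    · exact False.elim

end rhoCoord

lemma exists_mem_PhiD_ip_wD_eq_zero_iff {n k : ℕ} (hk : k < n) (a : ℕ → ℤ) (t : ℤ) :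
    (∃ α ∈ PhiD n, ip n (wD n k a t) α = 0) ↔ ∃ P Q, 1 ≤ P ∧ P < Q ∧ Q ≤ n ∧
      (wDCoord n k a t P + wDCoord n k a t Q = 0 ∨ wDCoord n k a t P = wDCoord n k a t Q) := by
  rw [exists_mem_PhiD_ip_eq_zero_iff, ← exists_fin_lt_iff_exists_nat]
  simp only [wD_apply hk]
  norm_cast

section SD

variable {n k : ℕ} {a : ℕ → ℤ} {x : ℚ}

lemma exists_SD_diff_iff :
    (∃ i j : ℕ, 1 ≤ i ∧ i ≤ k ∧ 1 ≤ j ∧ j ≤ n - k ∧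
      x = (∑ u ∈ Icc (k + 1 - i) (k + j - 1), (a u : ℚ)) + i + j - 1) ↔
    ∃ P Q, 1 ≤ P ∧ P ≤ k ∧ k < Q ∧ Q ≤ n ∧ x = rhoCoord n a P - rhoCoord n a Q := by
  constructor
  · rintro ⟨i, j, hi, hik, hj, hjn, rfl⟩
    refine ⟨k + 1 - i, k + j, by omega, by omega, by omega, by omega, ?_⟩
    rw [rhoCoord_sub (by omega) (by omega) (by omega),
      Icc_sub_one_right_eq_Ico_of_not_isMin
        (by simp only [isMin_iff_eq_bot, Nat.bot_eq_zero]; omega)]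
    push_cast [Nat.cast_sub (show i ≤ k + 1 by omega)]
    ring
  · rintro ⟨P, Q, hP, hPk, hkQ, hQ, rfl⟩
    refine ⟨k + 1 - P, Q - k, by omega, by omega, by omega, by omega, ?_⟩
    rw [rhoCoord_sub hP (by omega) hQ, show k + 1 - (k + 1 - P) = P by omega,
      show k + (Q - k) - 1 = Q - 1 by omega,
      Icc_sub_one_right_eq_Ico_of_not_isMin
        (by simp only [isMin_iff_eq_bot, Nat.bot_eq_zero]; omega)]
    push_cast [Nat.cast_sub (show P ≤ k + 1 by omega), Nat.cast_sub hkQ.le]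
    ring

lemma exists_SD_sum_iff :
    (∃ i j : ℕ, 1 ≤ i ∧ i ≤ k ∧ 1 ≤ j ∧ j ≤ n - k ∧
      x = (∑ u ∈ Icc (k + 1 - i) (n - 2), (a u : ℚ)) + (∑ u ∈ Icc (n + 1 - j) n, (a u : ℚ))
        + n - k + i + j - 2) ↔
    ∃ P Q, 1 ≤ P ∧ P ≤ k ∧ k < Q ∧ Q ≤ n ∧ x = rhoCoord n a P + rhoCoord n a Q := by
  constructor
  · rintro ⟨i, j, hi, hik, hj, hjn, rfl⟩
    refine ⟨k + 1 - i, n + 1 - j, by omega, by omega, by omega, by omega, ?_⟩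
    rw [rhoCoord_add (by omega) (by omega) (by omega)]
    push_cast [Nat.cast_sub (show i ≤ k + 1 by omega), Nat.cast_sub (show j ≤ n + 1 by omega)]
    ring
  · rintro ⟨P, Q, hP, hPk, hkQ, hQ, rfl⟩
    refine ⟨k + 1 - P, n + 1 - Q, by omega, by omega, by omega, by omega, ?_⟩
    rw [rhoCoord_add hP (by omega) hQ, show k + 1 - (k + 1 - P) = P by omega,
      show n + 1 - (n + 1 - Q) = Q by omega]
    push_cast [Nat.cast_sub (show P ≤ k + 1 by omega), Nat.cast_sub (show Q ≤ n + 1 by omega)]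
    ring

lemma exists_SD_double_iff (hk : k < n) :
    (∃ i j : ℕ, 1 ≤ i ∧ i < j ∧ j ≤ k ∧
      x = ((∑ u ∈ Icc (k + 1 - i) (n - 2), (a u : ℚ)) + (∑ u ∈ Icc (k + 1 - j) n, (a u : ℚ))
        + i + j + 2 * n - 2 * k - 2) / 2) ↔
    ∃ P Q, 1 ≤ P ∧ P < Q ∧ Q ≤ k ∧ 2 * x = rhoCoord n a P + rhoCoord n a Q := by
  constructor
  · rintro ⟨i, j, hi, hij, hjk, rfl⟩
    refine ⟨k + 1 - j, k + 1 - i, by omega, by omega, by omega, ?_⟩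
    rw [add_comm (rhoCoord n a _), rhoCoord_add (by omega) (by omega) (by omega)]
    push_cast [Nat.cast_sub (show i ≤ k + 1 by omega), Nat.cast_sub (show j ≤ k + 1 by omega)]
    ring
  · rintro ⟨P, Q, hP, hPQ, hQk, hx⟩
    refine ⟨k + 1 - Q, k + 1 - P, by omega, by omega, by omega, ?_⟩
    rw [add_comm (rhoCoord n a _), rhoCoord_add (by omega) (by omega) (by omega)] at hx
    rw [show k + 1 - (k + 1 - P) = P by omega, show k + 1 - (k + 1 - Q) = Q by omega]
    push_cast [Nat.cast_sub (show P ≤ k + 1 by omega), Nat.cast_sub (show Q ≤ k + 1 by omega)]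
    linarith

lemma mem_SD_iff (hk : k < n) : x ∈ SD n k a ↔ ∃ P Q, 1 ≤ P ∧ P < Q ∧ Q ≤ n ∧
    ((P ≤ k ∧ k < Q ∧ (x = rhoCoord n a P + rhoCoord n a Q ∨ x = rhoCoord n a P - rhoCoord n a Q))
      ∨ (Q ≤ k ∧ 2 * x = rhoCoord n a P + rhoCoord n a Q)) := by
  simp only [SD, Set.mem_union, Set.mem_ofPred_eq, exists_SD_diff_iff, exists_SD_sum_iff,
    exists_SD_double_iff hk]
  constructor
  · rintro ((⟨P, Q, hP, hPk, hkQ, hQ, h⟩ | ⟨P, Q, hP, hPk, hkQ, hQ, h⟩) | ⟨P, Q, hP, hPQ, hQk, h⟩)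
    exacts [⟨P, Q, hP, by omega, hQ, .inl ⟨hPk, hkQ, .inr h⟩⟩,
      ⟨P, Q, hP, by omega, hQ, .inl ⟨hPk, hkQ, .inl h⟩⟩, ⟨P, Q, hP, hPQ, by omega, .inr ⟨hQk, h⟩⟩]
  · rintro ⟨P, Q, hP, hPQ, hQ, ⟨hPk, hkQ, h | h⟩ | ⟨hQk, h⟩⟩
    exacts [.inl (.inr ⟨P, Q, hP, hPk, hkQ, hQ, h⟩), .inl (.inl ⟨P, Q, hP, hPk, hkQ, hQ, h⟩),
      .inr ⟨P, Q, hP, hPQ, hQk, h⟩]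

end SD

theorem singular_criterion_D_lt_general (n k : ℕ) (hn : 3 ≤ n) (hkn : k ≤ n - 2)
    (a : ℕ → ℤ) (ha : ∀ u, 1 ≤ u → u ≤ n → 0 ≤ a u) (t : ℤ) :
    (∃ α ∈ PhiD n, ip n (wD n k a t) α = 0) ↔ (t : ℚ) ∈ SD n k a := by
  have hk : k < n := by omega
  rw [exists_mem_PhiD_ip_wD_eq_zero_iff hk, mem_SD_iff hk]
  exact exists₂_congr fun P Q => and_congr_right fun hP => and_congr_right fun hPQ =>
    and_congr_right fun hQ => wDCoord_root_iff ha hP hPQ hQ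

/-- Singularity criterion of type `D`, `k ≤ n-2`: `λ+ρ-tλ_k` is singular iff `t` is an
entry of the step matrix `T^D_{k,λ}`. -/
theorem singular_criterion_D_lt (n k : ℕ) (hn : 3 ≤ n) (hk1 : 1 ≤ k) (hkn : k ≤ n - 2)
    (a : ℕ → ℤ) (ha : ∀ u, 1 ≤ u → u ≤ n → 0 ≤ a u) (t : ℤ) :
    (∃ α ∈ PhiD n, ip n (wD n k a t) α = 0) ↔ (t : ℚ) ∈ SD n k a :=
  singular_criterion_D_lt_general n k hn hkn a ha t
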